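/- arXiv:1007.5203 — 2 statements merged into one kernel-verified Lean document; each statement's English description precedes it below -/
import Mathlib

section
/- Let A and B be M×M matrices over the complex numbers and form the 2M×2M block matrix R with zero diagonal M×M blocks, upper-right block A, and lower-left block B. Then det(I + R) = Σ_{m=0}^{M} (−1)^m Σ_{k,l} det A(k,l) · det B(l,k), where the inner sum runs over all ordered pairs (k,l) of subsets of {1,…,M}, each of cardinality m. -/
/-- For subsets `k, l ⊆ {1,…,M}`, both of cardinality `m`, the determinant of
the `m × m` submatrix `A(k,l)` of `A` whose rows are indexed by the elements
of `k` and whose columns by the elements of `l`, each taken in increasing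
order.  (The value is `0` in the irrelevant case that `k` or `l` does not
have cardinality `m`; in the sums below the cardinalities are always `m`.) -/
noncomputable def pairMinor {M : ℕ} (A : Matrix (Fin M) (Fin M) ℂ) (m : ℕ)
    (k l : Finset (Fin M)) : ℂ :=
  if h : k.card = m ∧ l.card = m then
    (A.submatrix (fun i : Fin m => k.orderEmbOfFin h.1 i)
      (fun j : Fin m => l.orderEmbOfFin h.2 j)).det
  else 0

/-!
By the Schur complement, `det (1 + [[0, A], [B, 0]]) = det (1 - B * A)`. Expanding `det (1 + N)`
as the sum of the principal minors of `N`, the minor of `-(B * A)` on `l` is `(-1)^|l|` times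
`det (B(l, ·) * A(·, l))`, which the Cauchy–Binet formula splits as `∑ₖ det B(l,k) · det A(k,l)`.

Cauchy–Binet itself follows from multilinearity of `det` in the rows: `det (X * Y)` becomes a sum
over maps `r : Fin k → n` of `(∏ᵢ X i (r i)) · det (rows r of Y)`; the terms with `r` not injective
vanish, and an injective `r` is a permutation followed by the increasing enumeration of its image.
-/

open Finset Equiv Matrix Set.powersetCard

namespace Matrix

variable {R m n : Type*} [CommRing R] [Fintype n]

theorem det_one_add_eq_sum_det_submatrix [DecidableEq n] (M : Matrix n n R) :
    det (1 + M) = ∑ s : Finset n, det (M.submatrix ((↑) : s → n) (↑)) := by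
  rw [add_comm]
  calc (M + 1).det = detRowAlternating (M.row + row (1 : Matrix n n R) : n → n → R) := rfl
    _ = ∑ s : Finset n, det (of (s.piecewise M.row (row 1))) :=
      detRowAlternating.map_add_univ _ _
    _ = _ := Finset.sum_congr rfl fun s _ => det_piecewise_one_eq_submatrix_det M s

theorem det_mul_eq_sum_prod_mul_det_submatrix [Fintype m] [DecidableEq m]
    (X : Matrix m n R) (Y : Matrix n m R) :
    det (X * Y) = ∑ r : m → n, (∏ i, X i (r i)) * det (Y.submatrix r id) :=
  calc det (X * Y) = detRowAlternating (fun i => ∑ j, X i j • Y j) := by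
        congr 1; ext i k; simp [mul_apply]
    _ = ∑ r : m → n, detRowAlternating (fun i => X i (r i) • Y (r i)) :=
        detRowAlternating.toMultilinearMap.map_sum _
    _ = _ := by simp only [AlternatingMap.map_smul_univ, smul_eq_mul]; rfl

theorem det_mul_eq_sum_embedding [Fintype m] [DecidableEq m]
    (X : Matrix m n R) (Y : Matrix n m R) :
    det (X * Y) = ∑ φ : m ↪ n, (∏ i, X i (φ i)) * det (Y.submatrix φ id) := by
  classical
  rw [det_mul_eq_sum_prod_mul_det_submatrix,
    ← Fintype.sum_subtype_add_sum_subtype Function.Injective, add_eq_left.mpr]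
  · exact Fintype.sum_equiv (Equiv.subtypeInjectiveEquivEmbedding m n) _ _ fun _ => rfl
  · refine Fintype.sum_eq_zero _ fun r => ?_
    obtain ⟨i, j, hij, hne⟩ := Function.not_injective_iff.mp r.2
    rw [det_zero_of_row_eq hne (funext fun c => by simp [hij]), mul_zero]

end Matrix

namespace Set.powersetCard

variable {n : Type*} [LinearOrder n] {k : ℕ}

def permTransOfFinEmb (p : Set.powersetCard n k × Perm (Fin k)) : Fin k ↪ n :=
  p.2.toEmbedding.trans (ofFinEmbEquiv.symm p.1).toEmbedding

theorem ofFinEmb_permTransOfFinEmb (p : Set.powersetCard n k × Perm (Fin k)) :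
    ofFinEmb k n (permTransOfFinEmb p) = p.1 := by
  refine SetLike.coe_injective ?_
  rw [coe_ofFinEmb]
  change Set.range (ofFinEmbEquiv.symm p.1 ∘ p.2) = _
  ext x
  rw [p.2.surjective.range_comp, mem_range_ofFinEmbEquiv_symm_iff_mem]
  rfl

theorem permTransOfFinEmb_bijective :
    Function.Bijective (permTransOfFinEmb : Set.powersetCard n k × Perm (Fin k) → Fin k ↪ n) := by
  constructor
  · rintro ⟨s, σ⟩ ⟨t, τ⟩ h
    obtain rfl : s = t := by
      simpa only [ofFinEmb_permTransOfFinEmb] using congrArg (ofFinEmb k n) h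
    exact Prod.ext rfl <| Equiv.ext fun i =>
      (ofFinEmbEquiv.symm s).injective (DFunLike.congr_fun h i)
  · intro φ
    set s := ofFinEmb k n φ
    let σ : Fin k → Fin k := fun i => (orderIsoOfFin s).symm ⟨φ i, by simp [s]⟩
    have hσ : Function.Injective σ := fun i j h => φ.injective (by simpa [σ] using h)
    refine ⟨(s, Equiv.ofBijective σ hσ.bijective_of_finite), ?_⟩
    ext i
    exact congrArg Subtype.val ((orderIsoOfFin s).apply_symm_apply _)

end Set.powersetCard

namespace Matrix

variable {R : Type*} [CommRing R] {n : Type*} [LinearOrder n] {k : ℕ}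

theorem det_mul_eq_sum_powersetCard [Fintype n] (X : Matrix (Fin k) n R)
    (Y : Matrix n (Fin k) R) :
    det (X * Y) = ∑ s : Set.powersetCard n k,
      det (X.submatrix id (ofFinEmbEquiv.symm s)) * det (Y.submatrix (ofFinEmbEquiv.symm s) id) := by
  rw [det_mul_eq_sum_embedding,
    ← Fintype.sum_equiv (.ofBijective _ permTransOfFinEmb_bijective) _ _ fun _ => rfl,
    Fintype.sum_prod_type]
  refine Fintype.sum_congr _ _ fun s => ?_
  set e := ofFinEmbEquiv.symm s
  calc ∑ σ : Perm (Fin k), (∏ i, X i (e (σ i))) * det ((Y.submatrix e id).submatrix σ id)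
      = ∑ σ : Perm (Fin k),
          (((Perm.sign σ : ℤ) : R) * ∏ i, X i (e (σ i))) * det (Y.submatrix e id) := by
        refine sum_congr rfl fun σ _ => ?_
        rw [det_permute]
        ring
    _ = det (X.submatrix id e) * det (Y.submatrix e id) := by
        rw [← sum_mul, ← det_transpose (X.submatrix id e), det_apply' (X.submatrix id e)ᵀ]
        rfl

theorem det_submatrix_ofFinEmbEquiv_symm (M : Matrix n n R) (s : Set.powersetCard n k) :
    det (M.submatrix (ofFinEmbEquiv.symm s) (ofFinEmbEquiv.symm s)) =
      det (M.submatrix ((↑) : s.val → n) (↑)) :=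
  det_submatrix_equiv_self (orderIsoOfFin s).toEquiv (M.submatrix ((↑) : s.val → n) (↑))

end Matrix

theorem det_submatrix_mul_eq_sum_pairMinor {M m : ℕ} (A B : Matrix (Fin M) (Fin M) ℂ)
    (l : Set.powersetCard (Fin M) m) :
    det ((B * A).submatrix ((↑) : l.val → Fin M) (↑)) =
      ∑ k ∈ Finset.powersetCard m (Finset.univ : Finset (Fin M)),
        pairMinor B m l k * pairMinor A m k l := by
  rw [← det_submatrix_ofFinEmbEquiv_symm, submatrix_mul _ _ _ id _ Function.bijective_id,
    det_mul_eq_sum_powersetCard, Finset.sum_subtype (p := (· ∈ Set.powersetCard (Fin M) m))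
      (powersetCard m univ) fun k => by rw [mem_powersetCard_univ, Set.powersetCard.mem_iff]]
  exact Fintype.sum_congr _ _ fun k => by
    rw [pairMinor, dif_pos ⟨l.2, k.2⟩, pairMinor, dif_pos ⟨k.2, l.2⟩]
    rfl

/-- Corollary 5.3 at `t = 1`:
`det(I + [[0,A],[B,0]]) = Σ_{m=0}^{M} (−1)^m Σ_{k,l} det A(k,l) · det B(l,k)`,
the inner sum running over all pairs of subsets of `{1,…,M}` of cardinality `m`. -/
theorem det_one_add_offDiagBlock_eq_sum_minors (M : ℕ)
    (A B : Matrix (Fin M) (Fin M) ℂ) :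
    (1 + Matrix.fromBlocks 0 A B 0).det =
      ∑ m ∈ Finset.range (M + 1), (-1 : ℂ) ^ m *
        ∑ k ∈ Finset.powersetCard m (Finset.univ : Finset (Fin M)),
          ∑ l ∈ Finset.powersetCard m (Finset.univ : Finset (Fin M)),
            pairMinor A m k l * pairMinor B m l k := by
  have hschur : 1 + fromBlocks 0 A B 0 = fromBlocks 1 A B 1 := by
    rw [← fromBlocks_one, fromBlocks_add]
    simp
  rw [hschur, det_fromBlocks_one₁₁, sub_eq_add_neg, det_one_add_eq_sum_det_submatrix,
    ← Finset.powerset_univ, Finset.sum_powerset, Finset.card_univ, Fintype.card_fin]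
  refine Finset.sum_congr rfl fun m _ => ?_
  rw [Finset.sum_comm, Finset.mul_sum]
  refine Finset.sum_congr rfl fun l hl => ?_
  have hcard : l.card = m := mem_powersetCard_univ.mp hl
  simp only [submatrix_neg, Pi.neg_apply, det_neg, Fintype.card_coe, hcard]
  rw [det_submatrix_mul_eq_sum_pairMinor A B ⟨l, Set.powersetCard.mem_iff.mpr hcard⟩]
  simp_rw [mul_comm (pairMinor B m _ _)]
end

section
/- Let N be a positive integer, let 0 ≤ p ≤ N, let R be an N×N matrix over the complex numbers, and let J_p be the N×N diagonal matrix whose first p diagonal entries are 0 and whose remaining N−p diagonal entries are 1. Then det(J_p + R) = Σ_{n=0}^{N−p} Σ_{S} det R(S,S), where the inner sum runs over all subsets S of {1,…,N} of cardinality n + p that contain all of the indices 1,…,p. -/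
/-!
Expanding `det (diagonal d + R)` multilinearly in the rows gives a sum over the sets `s` of
rows taken from `R`; every other row is `d i • eᵢ`, so the term of `s` is `∏ i ∉ s, d i` times
the principal minor of `R` on `s`. For `d` the diagonal of `J_p` this product is `1` when `s`
contains the first `p` indices and `0` otherwise, and grouping the surviving sets by
cardinality gives the double sum.
-/

/-- The principal minor of an `N × N` complex matrix `R` indexed by a subset
`S ⊆ {1,…,N}`: the determinant of the submatrix of `R` whose rows and columns
are the elements of `S` taken in increasing order. -/
noncomputable def principalMinor {N : ℕ} (R : Matrix (Fin N) (Fin N) ℂ)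
    (S : Finset (Fin N)) : ℂ :=
  (R.submatrix (fun i : Fin S.card => S.orderEmbOfFin rfl i)
    (fun i : Fin S.card => S.orderEmbOfFin rfl i)).det

open Finset Matrix

namespace Matrix

theorem det_diagonal_add {n R : Type*} [Fintype n] [DecidableEq n] [CommRing R]
    (d : n → R) (M : Matrix n n R) :
    det (diagonal d + M) =
      ∑ s : Finset n, (∏ i ∈ sᶜ, d i) * (M.submatrix ((↑) : s → n) (↑)).det := by
  have hrows (s : Finset n) : s.piecewise M.row (diagonal d).row =
      fun i => (if i ∈ sᶜ then d i else 1) • s.piecewise M.row (1 : Matrix n n R).row i := by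
    funext i j
    by_cases hi : i ∈ s <;> simp [hi, diagonal_apply, one_apply]
  calc det (diagonal d + M)
      = ∑ s : Finset n, detRowAlternating (s.piecewise M.row (diagonal d).row) := by
        rw [add_comm]
        exact detRowAlternating.map_add_univ M.row (diagonal d).row
    _ = _ := by
        refine sum_congr rfl fun s _ => ?_
        rw [hrows, detRowAlternating.map_smul_univ, smul_eq_mul, prod_ite_mem, univ_inter,
          ← det_piecewise_one_eq_submatrix_det]
        rfl

end Matrix

namespace Finset

variable {α : Type*} [Fintype α]

theorem prod_compl_ite_zero_one {M₀ : Type*} [DecidableEq α] [CommMonoidWithZero M₀]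
    (q : α → Prop) [DecidablePred q] (s : Finset α) [Decidable (∀ i, q i → i ∈ s)] :
    ∏ i ∈ sᶜ, (if q i then (0 : M₀) else 1) = if ∀ i, q i → i ∈ s then 1 else 0 := by
  calc _ = ∏ i ∈ sᶜ, (if ¬q i then (1 : M₀) else 0) :=
        prod_congr rfl fun i _ => (ite_not _ _ _).symm
    _ = _ := by simp only [prod_boole, mem_compl, not_imp_comm, not_not]

theorem sum_filter_eq_sum_range_powersetCard {M : Type*} [AddCommMonoid M]
    (P : Finset α → Prop) [DecidablePred P] {p : ℕ} (hP : ∀ s, P s → p ≤ s.card)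
    (f : Finset α → M) :
    ∑ s with P s, f s =
      ∑ n ∈ range (Fintype.card α - p + 1),
        ∑ s ∈ (powersetCard (n + p) univ).filter P, f s := by
  rw [← sum_fiberwise_of_maps_to (g := fun s => s.card - p)
    (t := range (Fintype.card α - p + 1))]
  · refine sum_congr rfl fun n _ => sum_congr ?_ fun _ _ => rfl
    ext s
    simp only [mem_filter, mem_univ, true_and, mem_powersetCard, subset_univ]
    constructor
    · rintro ⟨hs, rfl⟩
      exact ⟨by have := hP s hs; omega, hs⟩
    · rintro ⟨hcard, hs⟩
      exact ⟨hs, by omega⟩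
  · intro s _
    have := s.card_le_univ
    rw [mem_range]
    omega

end Finset

theorem principalMinor_eq_det_submatrix {N : ℕ} (R : Matrix (Fin N) (Fin N) ℂ)
    (S : Finset (Fin N)) :
    principalMinor R S = (R.submatrix ((↑) : S → Fin N) (↑)).det :=
  det_submatrix_equiv_self (S.orderIsoOfFin rfl).toEquiv (R.submatrix (↑) (↑))

theorem det_Jp_add_eq_sum_principalMinors_general (N p : ℕ) (hp : p ≤ N)
    (R : Matrix (Fin N) (Fin N) ℂ) :
    (Matrix.diagonal (fun i : Fin N => if (i : ℕ) < p then (0 : ℂ) else 1)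
        + R).det =
      ∑ n ∈ Finset.range (N - p + 1),
        ∑ S ∈ (Finset.powersetCard (n + p)
            (Finset.univ : Finset (Fin N))).filter
              (fun S => ∀ i : Fin N, (i : ℕ) < p → i ∈ S),
          principalMinor R S := by
  have hcard (s : Finset (Fin N)) (hs : ∀ i : Fin N, (i : ℕ) < p → i ∈ s) : p ≤ s.card :=
    calc p = #{i : Fin N | (i : ℕ) < p} := by rw [Fin.card_filter_val_lt, min_eq_right hp]
      _ ≤ s.card := card_le_card fun i hi => hs i (mem_filter.mp hi).2
  calc _ = ∑ s with ∀ i : Fin N, (i : ℕ) < p → i ∈ s, principalMinor R s := by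
        rw [det_diagonal_add, sum_filter]
        refine sum_congr rfl fun s _ => ?_
        rw [prod_compl_ite_zero_one, boole_mul, principalMinor_eq_det_submatrix]
    _ = _ := by
        rw [sum_filter_eq_sum_range_powersetCard _ hcard, Fintype.card_fin]

/-- Proposition 5.7: with `J_p` the diagonal matrix whose first `p` diagonal
entries are `0` and whose remaining `N − p` are `1`,
`det(J_p + R) = Σ_{n=0}^{N−p} Σ_{S} det R(S,S)`, the inner sum running over
all subsets `S ⊆ {1,…,N}` of cardinality `n + p` containing `1,…,p`. -/
theorem det_Jp_add_eq_sum_principalMinors (N p : ℕ) (hN : 0 < N) (hp : p ≤ N)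
    (R : Matrix (Fin N) (Fin N) ℂ) :
    (Matrix.diagonal (fun i : Fin N => if (i : ℕ) < p then (0 : ℂ) else 1)
        + R).det =
      ∑ n ∈ Finset.range (N - p + 1),
        ∑ S ∈ (Finset.powersetCard (n + p)
            (Finset.univ : Finset (Fin N))).filter
              (fun S => ∀ i : Fin N, (i : ℕ) < p → i ∈ S),
          principalMinor R S :=
  det_Jp_add_eq_sum_principalMinors_general N p hp R
end
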